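/- arXiv:1105.2677 — 4 statements merged into one kernel-verified Lean document; each statement's English description precedes it below -/
import Mathlib

section
/- Let ρ and σ be Eulerian equivalent orientations of a finite graph G. If ρ is totally cyclic (admits no directed cut), then σ is also totally cyclic. -/
open Finset

/-- A multigraph on vertex type `V` with edge type `E`: each edge has two
(not necessarily distinct) endpoints, given with a reference orientation
from `fst` to `snd`. -/
structure Multigraph (V E : Type) where
  fst : E → V
  snd : E → V

namespace Multigraph

variable {V E : Type} [Fintype V] [Fintype E] [DecidableEq V] (G : Multigraph V E)

/-- An orientation of `G` is a choice, for each edge, of whether to keep (`false`)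
or reverse (`true`) the reference direction.  The source of edge `e` under
orientation `o`. -/
def src (o : E → Bool) (e : E) : V := if o e then G.snd e else G.fst e

/-- The target of edge `e` under orientation `o`. -/
def tgt (o : E → Bool) (e : E) : V := if o e then G.fst e else G.snd e

/-- The incidence number `ε(v,e)` of vertex `v` and edge `e` under orientation `o`:
`+1` if `e` enters `v`, `-1` if `e` leaves `v`, and `0` for loops and non-incident
edges (a loop contributes `+1` and `-1`, which cancel). -/
def inc (o : E → Bool) (v : V) (e : E) : ℤ :=
  (if G.tgt o e = v then 1 else 0) - (if G.src o e = v then 1 else 0)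

/-- `f : E → A` is a flow of `(G,o)` with values in the abelian group `A`:
the conservation law `∑_e ε(v,e) f(e) = 0` holds at every vertex `v`. -/
def IsFlow {A : Type} [AddCommGroup A] (o : E → Bool) (f : E → A) : Prop :=
  ∀ v : V, ∑ e : E, G.inc o v e • f e = 0

/-- The set of edges of the cut `[S, Sᶜ]`: edges with exactly one endpoint in `S`. -/
def cutEdges (S : Finset V) : Finset E :=
  Finset.univ.filter fun e => ¬ ((G.fst e ∈ S) ↔ (G.snd e ∈ S))

/-- `(G,o)` has a directed cut: a nonempty cut `[S,Sᶜ]` all of whose edges are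
directed from `S` to `Sᶜ`. -/
def HasDirectedCut (o : E → Bool) : Prop :=
  ∃ S : Finset V, (∃ e, e ∈ G.cutEdges S ∧ G.src o e ∈ S) ∧
    ∀ e ∈ G.cutEdges S, G.src o e ∈ S

/-- An orientation is totally cyclic if it admits no directed cut. -/
def TotallyCyclic (o : E → Bool) : Prop := ¬ G.HasDirectedCut o

/-- Two orientations are Eulerian equivalent if the spanning subgraph induced by
the edges on which they disagree is directed Eulerian (in-degree = out-degree at
every vertex) with respect to the first orientation. -/
def EulerianEquiv (o₁ o₂ : E → Bool) : Prop :=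
  ∀ v : V, ∑ e : E, (if o₁ e = o₂ e then 0 else G.inc o₁ v e) = 0

/-- The components relation: `v` and `w` are joined by an edge. -/
def rel (v w : V) : Prop :=
  ∃ e : E, (G.fst e = v ∧ G.snd e = w) ∨ (G.fst e = w ∧ G.snd e = v)

/-- The number of connected components `c(G)`. -/
noncomputable def numComponents : ℕ := Nat.card (Quot G.rel)

/-- The cycle rank `n(G) = |E| - |V| + c(G)`. -/
noncomputable def cycleRank : ℕ :=
  Fintype.card E + G.numComponents - Fintype.card V

/-- `G` is bridgeless: no cut consists of a single edge. -/
def Bridgeless : Prop := ∀ S : Finset V, (G.cutEdges S).card ≠ 1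

end Multigraph

/-
Suppose `σ` has a directed cut `[S, Sᶜ]`. The edges on which `ρ` and `σ` disagree form, with the
`ρ`-orientation, an Eulerian subgraph, so its net flow into `S` vanishes; but each of its cut
edges enters `S` under `ρ`, since it leaves `S` under `σ`. Hence `ρ` and `σ` agree on the cut,
which is then directed for `ρ` as well.
-/

namespace Multigraph

variable {V E : Type} [DecidableEq V] (G : Multigraph V E)

theorem sum_inc (o : E → Bool) (S : Finset V) (e : E) :
    ∑ v ∈ S, G.inc o v e =
      (if G.tgt o e ∈ S then 1 else 0) - (if G.src o e ∈ S then 1 else 0) := by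
  simp [inc, Finset.sum_sub_distrib]

theorem inc_of_ne {o₁ o₂ : E → Bool} {e : E} (he : o₁ e ≠ o₂ e) (v : V) :
    G.inc o₁ v e = -G.inc o₂ v e := by
  cases h₁ : o₁ e <;> cases h₂ : o₂ e <;> simp_all [inc, src, tgt]

variable [Fintype E]

open scoped Classical in
theorem sum_inc_of_forall_src_mem {o : E → Bool} {S : Finset V}
    (hS : ∀ e ∈ G.cutEdges S, G.src o e ∈ S) (e : E) :
    ∑ v ∈ S, G.inc o v e = -if e ∈ G.cutEdges S then 1 else 0 := by
  have hcut := hS e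
  simp only [cutEdges, Finset.mem_filter, Finset.mem_univ, true_and] at hcut ⊢
  rw [sum_inc]
  cases ho : o e <;> by_cases h₁ : G.fst e ∈ S <;> by_cases h₂ : G.snd e ∈ S <;>
    simp_all [src, tgt]

theorem IsFlow.sum_sum_inc_smul {A : Type} [AddCommGroup A] {o : E → Bool} {f : E → A}
    (hf : G.IsFlow o f) (S : Finset V) : ∑ e, (∑ v ∈ S, G.inc o v e) • f e = 0 := by
  simp_rw [Finset.sum_smul]
  rw [Finset.sum_comm]
  exact Finset.sum_eq_zero fun v _ => hf v

variable {G}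

theorem EulerianEquiv.isFlow {ρ σ : E → Bool} (h : G.EulerianEquiv ρ σ) :
    G.IsFlow ρ fun e => if ρ e = σ e then (0 : ℤ) else 1 := by
  intro v
  simpa [apply_ite, smul_eq_mul] using h v

theorem EulerianEquiv.eq_of_mem_cutEdges {ρ σ : E → Bool} (h : G.EulerianEquiv ρ σ)
    {S : Finset V} (hS : ∀ e ∈ G.cutEdges S, G.src σ e ∈ S) :
    ∀ e ∈ G.cutEdges S, ρ e = σ e := by
  classical
  have hterm : ∀ e, (∑ v ∈ S, G.inc ρ v e) • (if ρ e = σ e then (0 : ℤ) else 1) =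
      if e ∈ G.cutEdges S ∧ ρ e ≠ σ e then 1 else 0 := by
    intro e
    by_cases he : ρ e = σ e
    · simp [he]
    · simp only [Finset.sum_congr rfl fun v _ => G.inc_of_ne he v, Finset.sum_neg_distrib,
        G.sum_inc_of_forall_src_mem hS e]
      split_ifs <;> simp_all
  have hflux := h.isFlow.sum_sum_inc_smul G S
  simp only [hterm, Finset.sum_boole, Nat.cast_eq_zero, Finset.card_eq_zero,
    Finset.filter_eq_empty_iff] at hflux
  intro e he
  by_contra hne
  exact hflux (Finset.mem_univ e) ⟨he, hne⟩

end Multigraph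

theorem totallyCyclic_of_eulerianEquiv_general {V E : Type} [Fintype E]
    [DecidableEq V] (G : Multigraph V E) (ρ σ : E → Bool)
    (h : G.EulerianEquiv ρ σ) (hρ : G.TotallyCyclic ρ) : G.TotallyCyclic σ := by
  rintro ⟨S, ⟨e₀, he₀, hsrc₀⟩, hS⟩
  have hsrc : ∀ e ∈ G.cutEdges S, G.src ρ e = G.src σ e := fun e he => by
    simp only [Multigraph.src, h.eq_of_mem_cutEdges hS e he]
  exact hρ ⟨S, ⟨e₀, he₀, hsrc e₀ he₀ ▸ hsrc₀⟩, fun e he => hsrc e he ▸ hS e he⟩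

/-- if two orientations are Eulerian equivalent and one of them is
totally cyclic (no directed cut), then so is the other. -/
theorem totallyCyclic_of_eulerianEquiv {V E : Type} [Fintype V] [Fintype E]
    [DecidableEq V] (G : Multigraph V E) (ρ σ : E → Bool)
    (h : G.EulerianEquiv ρ σ) (hρ : G.TotallyCyclic ρ) : G.TotallyCyclic σ :=
  totallyCyclic_of_eulerianEquiv_general G ρ σ h hρ
end

section
/- An orientation ε of a finite graph G admits a strictly positive real-valued flow (a flow f with f(e) > 0 for all edges e) if and only if ε is totally cyclic, i.e., (G,ε) contains no directed cut. -/
open Finset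

/-!
A positive flow cannot cross a directed cut: summing the conservation law over the source side
of the cut leaves minus the total flow on the cut edges, which would be negative.

Conversely, if there is no directed cut then the target of every edge reaches its source by a
directed walk (otherwise the vertices not reachable from the target would span a directed cut).
The edge together with such a walk is a nonnegative integer circulation through the edge, and
the sum of these circulations over all edges is a positive flow.
-/

namespace Multigraph

variable {V E : Type}

def Arc (G : Multigraph V E) (o : E → Bool) (v w : V) : Prop :=
  ∃ e : E, G.src o e = v ∧ G.tgt o e = w

variable [DecidableEq V] (G : Multigraph V E) (o : E → Bool)

theorem sum_inc_eq (S : Finset V) (e : E) :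
    ∑ v ∈ S, G.inc o v e =
      (if G.tgt o e ∈ S then 1 else 0) - (if G.src o e ∈ S then 1 else 0) := by
  simp [inc, sum_sub_distrib]

section Cut

variable [Fintype E]

theorem mem_cutEdges_iff (S : Finset V) (e : E) :
    e ∈ G.cutEdges S ↔ ¬ (G.src o e ∈ S ↔ G.tgt o e ∈ S) := by
  simp only [cutEdges, mem_filter, mem_univ, true_and, src, tgt]
  cases o e <;> simp [iff_comm]

theorem sum_inc_of_mem_cutEdges {S : Finset V} {e : E} (he : e ∈ G.cutEdges S)
    (hsrc : G.src o e ∈ S) : ∑ v ∈ S, G.inc o v e = -1 := by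
  have htgt : G.tgt o e ∉ S := fun htgt => (G.mem_cutEdges_iff o S e).1 he (iff_of_true hsrc htgt)
  simp [sum_inc_eq, hsrc, htgt]

theorem sum_inc_of_notMem_cutEdges {S : Finset V} {e : E} (he : e ∉ G.cutEdges S) :
    ∑ v ∈ S, G.inc o v e = 0 := by
  have hiff : G.src o e ∈ S ↔ G.tgt o e ∈ S := not_not.1 <| mt (G.mem_cutEdges_iff o S e).2 he
  by_cases hsrc : G.src o e ∈ S <;> simp [sum_inc_eq, hsrc, ← hiff]

end Cut

section Flow

variable {G o} [Fintype E] {A : Type} [AddCommGroup A]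

theorem IsFlow.sum_inc_smul_eq_zero {f : E → A} (hf : G.IsFlow o f) (S : Finset V) :
    ∑ e, (∑ v ∈ S, G.inc o v e) • f e = 0 := by
  simp_rw [sum_smul]
  rw [sum_comm]
  exact sum_eq_zero fun v _ => hf v

theorem IsFlow.sum_cutEdges_eq_zero {f : E → A} (hf : G.IsFlow o f) {S : Finset V}
    (hS : ∀ e ∈ G.cutEdges S, G.src o e ∈ S) : ∑ e ∈ G.cutEdges S, f e = 0 := by
  calc ∑ e ∈ G.cutEdges S, f e
      = -∑ e ∈ G.cutEdges S, (∑ v ∈ S, G.inc o v e) • f e := by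
        rw [← sum_neg_distrib]
        refine sum_congr rfl fun e he => ?_
        rw [G.sum_inc_of_mem_cutEdges o he (hS e he), neg_smul, one_smul, neg_neg]
    _ = -∑ e, (∑ v ∈ S, G.inc o v e) • f e := by
        rw [sum_subset (subset_univ _) fun e _ he => by
          rw [G.sum_inc_of_notMem_cutEdges o he, zero_smul]]
    _ = 0 := by rw [hf.sum_inc_smul_eq_zero, neg_zero]

theorem IsFlow.totallyCyclic_of_pos [PartialOrder A] [IsOrderedAddMonoid A] {f : E → A}
    (hf : G.IsFlow o f) (hpos : ∀ e, 0 < f e) : G.TotallyCyclic o := by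
  rintro ⟨S, ⟨e₀, he₀, -⟩, hS⟩
  exact (sum_pos (fun e _ => hpos e) ⟨e₀, he₀⟩).ne' (hf.sum_cutEdges_eq_zero hS)

theorem isFlow_sum {ι : Type} {s : Finset ι} {f : ι → E → A}
    (hf : ∀ i ∈ s, G.IsFlow o (f i)) : G.IsFlow o (∑ i ∈ s, f i) := fun v => by
  simp_rw [Finset.sum_apply, smul_sum]
  rw [sum_comm]
  exact sum_eq_zero fun i hi => hf i hi v

theorem IsFlow.map {B : Type} [AddCommGroup B] {f : E → A} (hf : G.IsFlow o f) (φ : A →+ B) :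
    G.IsFlow o (φ ∘ f) := fun v => by
  simpa [map_sum, map_zsmul] using congrArg φ (hf v)

end Flow

section Circulation

variable [Fintype E]

theorem sum_inc_smul_add_single [DecidableEq E] (g : E → ℤ) (v : V) (e : E) :
    ∑ e', G.inc o v e' • (g + Pi.single e 1 : E → ℤ) e' =
      ∑ e', G.inc o v e' • g e' + G.inc o v e := by
  simp [Pi.single_apply, mul_add, sum_add_distrib]

theorem exists_nonneg_sum_inc_eq_of_reflTransGen {a b : V}
    (h : Relation.ReflTransGen (G.Arc o) a b) :
    ∃ g : E → ℤ, 0 ≤ g ∧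
      ∀ v, ∑ e, G.inc o v e • g e = (if b = v then 1 else 0) - (if a = v then 1 else 0) := by
  classical
  induction h with
  | refl => exact ⟨0, le_rfl, by simp⟩
  | tail _ hbc ih =>
    obtain ⟨g, hg, hgv⟩ := ih
    obtain ⟨e, rfl, rfl⟩ := hbc
    refine ⟨g + Pi.single e 1, add_nonneg hg (Pi.single_nonneg.2 zero_le_one), fun v => ?_⟩
    rw [sum_inc_smul_add_single, hgv, inc]
    ring

theorem reflTransGen_tgt_src_of_totallyCyclic [Fintype V] (h : G.TotallyCyclic o) (e : E) :
    Relation.ReflTransGen (G.Arc o) (G.tgt o e) (G.src o e) := by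
  classical
  by_contra hne
  let S : Finset V := univ.filter fun x => ¬ Relation.ReflTransGen (G.Arc o) (G.tgt o e) x
  have hS : ∀ e' ∈ G.cutEdges S, G.src o e' ∈ S := fun e' he' => by
    by_contra hsrc
    refine (G.mem_cutEdges_iff o S e').1 he' (iff_of_false hsrc ?_)
    simp only [S, mem_filter, mem_univ, true_and, not_not] at hsrc ⊢
    exact hsrc.tail ⟨e', rfl, rfl⟩
  have he : e ∈ G.cutEdges S := (G.mem_cutEdges_iff o S e).2 fun hiff => by
    simp only [S, mem_filter, mem_univ, true_and] at hiff
    exact hiff.1 hne Relation.ReflTransGen.refl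
  exact h ⟨S, ⟨e, he, hS e he⟩, hS⟩

theorem exists_circulation_pos_at [Fintype V] (h : G.TotallyCyclic o) (e : E) :
    ∃ c : E → ℤ, G.IsFlow o c ∧ 0 ≤ c ∧ 0 < c e := by
  classical
  obtain ⟨g, hg, hgv⟩ := G.exists_nonneg_sum_inc_eq_of_reflTransGen o
    (G.reflTransGen_tgt_src_of_totallyCyclic o h e)
  refine ⟨g + Pi.single e 1, fun v => ?_, add_nonneg hg (Pi.single_nonneg.2 zero_le_one), ?_⟩
  · rw [sum_inc_smul_add_single, hgv, inc]
    ring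
  · simpa using add_pos_of_nonneg_of_pos (hg e) one_pos

theorem exists_pos_int_flow_of_totallyCyclic [Fintype V] (h : G.TotallyCyclic o) :
    ∃ f : E → ℤ, G.IsFlow o f ∧ ∀ e, 0 < f e := by
  choose c hc hc0 hce using G.exists_circulation_pos_at o h
  refine ⟨∑ e, c e, isFlow_sum fun e _ => hc e, fun e => ?_⟩
  simpa only [Finset.sum_apply] using sum_pos' (fun e' _ => hc0 e' e) ⟨e, mem_univ e, hce e⟩

end Circulation

end Multigraph

/-- an orientation `ε` of a finite graph admits a strictly positive
real-valued flow iff it is totally cyclic (contains no directed cut). -/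
theorem exists_positive_flow_iff_totallyCyclic {V E : Type} [Fintype V] [Fintype E]
    [DecidableEq V] (G : Multigraph V E) (ε : E → Bool) :
    (∃ f : E → ℝ, G.IsFlow ε f ∧ ∀ e : E, 0 < f e) ↔ G.TotallyCyclic ε := by
  refine ⟨fun ⟨f, hf, hpos⟩ => hf.totallyCyclic_of_pos hpos, fun h => ?_⟩
  obtain ⟨f, hf, hpos⟩ := G.exists_pos_int_flow_of_totallyCyclic ε h
  exact ⟨_, hf.map (Int.castAddHom ℝ), fun e => Int.cast_pos.2 (hpos e)⟩
end

section
/- (Tutte) Let G be a finite graph with orientation ε and q a positive integer. The reduction-mod-q map from nowhere-zero integer q-flows of (G,ε) (integer flows f with 0 < |f(e)| < q for all e) onto nowhere-zero ℤ/qℤ-flows of (G,ε) is surjective. Consequently every ℤ/qℤ-flow lifts to an integer flow with all values of absolute value less than q. -/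
open Finset

/-!
Lift `g` to `f = val ∘ g`, with values in `[0, q)`; the divergence of `f` vanishes mod `q`.
While some divergence is nonzero, pick `x` with positive divergence. The vertices reachable
from `x` along residual edges (edges with `f e ≠ 0`, traversed forward when `f e < 0` and
backward when `f e > 0`) form a set that no residual edge leaves, so its total divergence is
nonpositive and it contains some `y` with negative divergence. Adding `±q` to `f` along a
residual path from `x` to `y` without repeated edges keeps `|f| < q` and `f mod q`, moves
both divergences at `x` and `y` towards zero by `q`, and leaves all others unchanged.
-/

namespace Multigraph

variable {V E : Type} (G : Multigraph V E) (o : E → Bool)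

section Residual

variable (f : E → ℤ)

def residualSign (e : E) : ℤ := if f e < 0 then 1 else -1

def residualSrc (e : E) : V := if f e < 0 then G.src o e else G.tgt o e

def residualTgt (e : E) : V := if f e < 0 then G.tgt o e else G.src o e

theorem abs_add_mul_residualSign_lt {q : ℤ} {e : E} (hf : |f e| < q) (hne : f e ≠ 0) :
    |f e + q * residualSign f e| < q := by
  rw [abs_lt] at hf ⊢
  by_cases h : f e < 0 <;> simp only [residualSign, h, if_true, if_false] <;> omega

theorem inc_mul_residualSign [DecidableEq V] (v : V) (e : E) :
    G.inc o v e * residualSign f e =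
      (if G.residualTgt o f e = v then 1 else 0) - (if G.residualSrc o f e = v then 1 else 0) := by
  by_cases h : f e < 0 <;> simp [residualSign, residualSrc, residualTgt, inc, h]

def IsResidualWalk : V → V → List E → Prop
  | x, y, [] => x = y
  | x, y, e :: l => f e ≠ 0 ∧ G.residualSrc o f e = x ∧ IsResidualWalk (G.residualTgt o f e) y l

variable {G o f}

theorem IsResidualWalk.append {x m y : V} {l₁ l₂ : List E} (h₁ : G.IsResidualWalk o f x m l₁)
    (h₂ : G.IsResidualWalk o f m y l₂) : G.IsResidualWalk o f x y (l₁ ++ l₂) := by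
  induction l₁ generalizing x with
  | nil => exact h₁ ▸ h₂
  | cons e l ih => exact ⟨h₁.1, h₁.2.1, ih h₁.2.2⟩

theorem IsResidualWalk.of_append {x y : V} {l₁ l₂ : List E}
    (h : G.IsResidualWalk o f x y (l₁ ++ l₂)) :
    ∃ m, G.IsResidualWalk o f x m l₁ ∧ G.IsResidualWalk o f m y l₂ := by
  induction l₁ generalizing x with
  | nil => exact ⟨x, rfl, h⟩
  | cons e l ih =>
    obtain ⟨m, h₁, h₂⟩ := ih h.2.2
    exact ⟨m, ⟨h.1, h.2.1, h₁⟩, h₂⟩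

theorem IsResidualWalk.ne_zero {x y : V} {l : List E} (h : G.IsResidualWalk o f x y l)
    {e : E} (he : e ∈ l) : f e ≠ 0 := by
  induction l generalizing x with
  | nil => simp at he
  | cons e' l ih =>
    rcases List.mem_cons.mp he with rfl | he
    exacts [h.1, ih h.2.2 he]

theorem IsResidualWalk.exists_nodup_sublist {x y : V} {l : List E}
    (h : G.IsResidualWalk o f x y l) :
    ∃ l', l'.Nodup ∧ l'.Sublist l ∧ G.IsResidualWalk o f x y l' := by
  induction hn : l.length using Nat.strong_induction_on generalizing x l with
  | _ n ih =>
  match l, h with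
  | [], h => exact ⟨[], List.nodup_nil, List.Sublist.refl _, h⟩
  | e :: t, ⟨hne, hx, ht⟩ =>
    by_cases he : e ∈ t
    · -- cut out the closed walk between the two occurrences of `e`
      obtain ⟨t₁, t₂, rfl⟩ := List.append_of_mem he
      obtain ⟨m, -, hm⟩ := ht.of_append
      obtain ⟨l', hnd, hsub, hl'⟩ := ih _ (by simp [← hn]) (hm.2.1.symm.trans hx ▸ hm) rfl
      exact ⟨l', hnd, hsub.trans ((List.sublist_append_right _ _).cons e), hl'⟩
    · obtain ⟨l', hnd, hsub, hl'⟩ := ih _ (by simp [← hn]) ht rfl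
      exact ⟨e :: l', List.nodup_cons.mpr ⟨fun he' => he (hsub.subset he'), hnd⟩,
        hsub.cons_cons e, hne, hx, hl'⟩

/- Multiplicities rather than membership, so that the divergence telescopes along any walk
(`divergence_augmentation`); for walks without repeated edges the two agree. -/
variable (f) in
def augmentation [DecidableEq E] (l : List E) (e : E) : ℤ := l.count e * residualSign f e

theorem abs_add_mul_augmentation_lt [DecidableEq E] {q : ℤ} {x y : V} {l : List E}
    (hl : G.IsResidualWalk o f x y l) (hnd : l.Nodup) (hf : ∀ e, |f e| < q) (e : E) :
    |f e + q * augmentation f l e| < q := by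
  have hcount := List.nodup_iff_count_le_one.mp hnd e
  rcases Nat.lt_or_ge (l.count e) 1 with h | h
  · simpa [augmentation, Nat.lt_one_iff.mp h] using hf e
  · have he : e ∈ l := List.count_pos_iff.mp h
    simpa [augmentation, le_antisymm hcount h] using
      abs_add_mul_residualSign_lt f (hf e) (hl.ne_zero he)

end Residual

section Divergence

variable [DecidableEq V] [Fintype E] {A : Type} [AddCommGroup A]

def divergence (f : E → A) (v : V) : A := ∑ e, G.inc o v e • f e

theorem divergence_add (f g : E → A) (v : V) :
    G.divergence o (f + g) v = G.divergence o f v + G.divergence o g v := by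
  simp only [divergence, Pi.add_apply, smul_add, sum_add_distrib]

theorem divergence_zsmul (c : ℤ) (f : E → A) (v : V) :
    G.divergence o (c • f) v = c • G.divergence o f v := by
  simp only [divergence, Pi.smul_apply, smul_sum, smul_comm c]

theorem divergence_single [DecidableEq E] (e : E) (a : A) (v : V) :
    G.divergence o (Pi.single e a) v = G.inc o v e • a := by
  simp [divergence, Pi.single_apply]

theorem map_divergence {B : Type} [AddCommGroup B] (φ : A →+ B) (f : E → A) (v : V) :
    φ (G.divergence o f v) = G.divergence o (φ ∘ f) v := by
  simp [divergence, map_sum, map_zsmul]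

theorem sum_divergence_eq [Fintype V] (f : E → A) (X : Finset V) :
    ∑ v ∈ X, G.divergence o f v =
      ∑ e, ((if G.tgt o e ∈ X then 1 else 0) - (if G.src o e ∈ X then 1 else 0) : ℤ) • f e := by
  simp only [divergence]
  rw [sum_comm]
  refine sum_congr rfl fun e _ => ?_
  simp only [inc, sub_smul, sum_sub_distrib, ← sum_smul, sum_ite_eq]

theorem sum_divergence [Fintype V] (f : E → A) : ∑ v, G.divergence o f v = 0 := by
  simp [sum_divergence_eq]

variable {G o}

theorem divergence_augmentation [DecidableEq E] {f : E → ℤ} {x y : V} {l : List E}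
    (hl : G.IsResidualWalk o f x y l) (v : V) :
    G.divergence o (augmentation f l) v = (if y = v then 1 else 0) - (if x = v then 1 else 0) := by
  induction l generalizing x with
  | nil => simp [augmentation, divergence, show x = y from hl]
  | cons e l ih =>
    have : augmentation f (e :: l) = augmentation f l + Pi.single e (residualSign f e) := by
      ext e'
      by_cases h : e = e' <;> simp [augmentation, h, add_mul, eq_comm]
    rw [this, divergence_add, divergence_single, smul_eq_mul, inc_mul_residualSign, ih hl.2.2,
      hl.2.1]
    ring

theorem sum_divergence_nonpos_of_closed [Fintype V] (f : E → ℤ) (X : Finset V)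
    (hX : ∀ e, f e ≠ 0 → G.residualSrc o f e ∈ X → G.residualTgt o f e ∈ X) :
    ∑ v ∈ X, G.divergence o f v ≤ 0 := by
  rw [sum_divergence_eq]
  refine sum_nonpos fun e _ => ?_
  rcases lt_trichotomy (f e) 0 with h | h | h
  · have := hX e h.ne
    simp only [residualSrc, residualTgt, h, if_true] at this
    split_ifs <;> simp_all [h.le]
  · simp [h]
  · have := hX e h.ne'
    simp only [residualSrc, residualTgt, h.not_gt, if_false] at this
    split_ifs <;> simp_all [h.le]

theorem exists_residualWalk_divergence_neg [Fintype V] {f : E → ℤ} {x : V}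
    (hx : 0 < G.divergence o f x) :
    ∃ y l, G.IsResidualWalk o f x y l ∧ G.divergence o f y < 0 := by
  classical
  by_contra! hneg
  let X := univ.filter fun v => ∃ l, G.IsResidualWalk o f x v l
  have hclosed : ∀ e, f e ≠ 0 → G.residualSrc o f e ∈ X → G.residualTgt o f e ∈ X := by
    simp only [X, mem_filter, mem_univ, true_and]
    rintro e hne ⟨l, hl⟩
    exact ⟨l ++ [e], hl.append ⟨hne, rfl, rfl⟩⟩
  have hpos : 0 < ∑ v ∈ X, G.divergence o f v := by
    refine sum_pos' (fun v hv => ?_) ⟨x, ?_, hx⟩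
    · obtain ⟨l, hl⟩ := (mem_filter.mp hv).2
      exact hneg v l hl
    · exact mem_filter.mpr ⟨mem_univ x, [], rfl⟩
  exact (sum_divergence_nonpos_of_closed f X hclosed).not_gt hpos

theorem exists_modEq_sum_natAbs_divergence_lt [Fintype V] {q : ℤ} {f : E → ℤ} {x : V}
    (hq : 0 < q) (hf : ∀ e, |f e| < q) (hdvd : ∀ v, q ∣ G.divergence o f v)
    (hx : 0 < G.divergence o f x) :
    ∃ f' : E → ℤ, (∀ e, |f' e| < q) ∧ (∀ v, q ∣ G.divergence o f' v) ∧
      (∀ e, f' e ≡ f e [ZMOD q]) ∧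
      ∑ v, (G.divergence o f' v).natAbs < ∑ v, (G.divergence o f v).natAbs := by
  classical
  obtain ⟨y, l₀, hl₀, hy⟩ := exists_residualWalk_divergence_neg hx
  obtain ⟨l, hnd, -, hl⟩ := hl₀.exists_nodup_sublist
  have hdiv : ∀ v, G.divergence o (f + q • augmentation f l) v =
      G.divergence o f v + q * ((if y = v then 1 else 0) - (if x = v then 1 else 0)) := by
    intro v
    rw [divergence_add, divergence_zsmul, divergence_augmentation hl, smul_eq_mul]
  have hqx : q ≤ G.divergence o f x := Int.le_of_dvd hx (hdvd x)
  have hqy : q ≤ -G.divergence o f y := Int.le_of_dvd (neg_pos.mpr hy) (dvd_neg.mpr (hdvd y))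
  have hxy : x ≠ y := by rintro rfl; omega
  refine ⟨f + q • augmentation f l, abs_add_mul_augmentation_lt hl hnd hf, fun v => ?_,
    fun e => ?_, ?_⟩
  · rw [hdiv]
    exact dvd_add (hdvd v) (dvd_mul_right _ _)
  · simp [Int.ModEq]
  · have hdx : (G.divergence o (f + q • augmentation f l) x).natAbs <
        (G.divergence o f x).natAbs := by
      rw [hdiv, if_neg hxy.symm, if_pos rfl, zero_sub, mul_neg_one]
      omega
    refine sum_lt_sum (fun v _ => ?_) ⟨x, mem_univ x, hdx⟩
    rcases eq_or_ne x v with rfl | hvx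
    · exact hdx.le
    rcases eq_or_ne y v with rfl | hvy
    · rw [hdiv, if_pos rfl, if_neg hvx, sub_zero, mul_one]
      omega
    · rw [hdiv, if_neg hvx, if_neg hvy, sub_zero, mul_zero, add_zero]

theorem exists_isFlow_modEq [Fintype V] {q : ℤ} (hq : 0 < q) (f : E → ℤ) (hf : ∀ e, |f e| < q)
    (hdvd : ∀ v, q ∣ G.divergence o f v) :
    ∃ f' : E → ℤ, G.IsFlow o f' ∧ (∀ e, |f' e| < q) ∧ ∀ e, f' e ≡ f e [ZMOD q] := by
  by_cases hflow : G.IsFlow o f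
  · exact ⟨f, hflow, hf, fun _ => rfl⟩
  obtain ⟨x, hx⟩ : ∃ x, 0 < G.divergence o f x := by
    by_contra! hnonpos
    exact hflow ((sum_eq_zero_iff_of_nonpos fun v _ => hnonpos v).mp (G.sum_divergence o f)
      · (mem_univ _))
  obtain ⟨f₁, hf₁, hdvd₁, hmod₁, hlt⟩ := exists_modEq_sum_natAbs_divergence_lt hq hf hdvd hx
  obtain ⟨f', hflow', hf', hmod⟩ := exists_isFlow_modEq hq f₁ hf₁ hdvd₁
  exact ⟨f', hflow', hf', fun e => (hmod e).trans (hmod₁ e)⟩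
termination_by ∑ v, (G.divergence o f v).natAbs

theorem exists_isFlow_intCast_eq [Fintype V] {q : ℕ} [NeZero q] {g : E → ZMod q}
    (hg : G.IsFlow o g) :
    ∃ f : E → ℤ, G.IsFlow o f ∧ (∀ e, |f e| < q) ∧ ∀ e, (f e : ZMod q) = g e := by
  let f₀ : E → ℤ := fun e => (g e).val
  have hf₀ : Int.castAddHom (ZMod q) ∘ f₀ = g := funext fun e => by simp [f₀]
  have hdvd : ∀ v, (q : ℤ) ∣ G.divergence o f₀ v := fun v => by
    rw [← ZMod.intCast_zmod_eq_zero_iff_dvd]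
    change Int.castAddHom (ZMod q) (G.divergence o f₀ v) = 0
    rw [map_divergence, hf₀]
    exact hg v
  have hbound : ∀ e, |f₀ e| < q := fun e => by
    rw [abs_of_nonneg (Int.natCast_nonneg _)]
    exact_mod_cast ZMod.val_lt (g e)
  obtain ⟨f, hflow, hf, hmod⟩ :=
    exists_isFlow_modEq (by exact_mod_cast NeZero.pos q) f₀ hbound hdvd
  refine ⟨f, hflow, hf, fun e => ?_⟩
  rw [(ZMod.intCast_eq_intCast_iff _ _ _).mpr (hmod e), ← congrFun hf₀ e]
  rfl

end Divergence

end Multigraph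

/-- Tutte: for a positive integer `q`, reduction mod `q` maps the
nowhere-zero integer `q`-flows of `(G,ε)` onto the nowhere-zero `ℤ/qℤ`-flows;
and every `ℤ/qℤ`-flow lifts to an integer flow with all values of absolute value
less than `q`. -/
theorem modq_surjective_on_flows {V E : Type} [Fintype V] [Fintype E]
    [DecidableEq V] (G : Multigraph V E) (ε : E → Bool) (q : ℕ) (hq : 0 < q) :
    (∀ g : E → ZMod q, G.IsFlow ε g → (∀ e, g e ≠ 0) →
      ∃ f : E → ℤ, G.IsFlow ε f ∧ (∀ e, 0 < |f e| ∧ |f e| < (q : ℤ)) ∧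
        ∀ e, ((f e : ZMod q) = g e)) ∧
    (∀ g : E → ZMod q, G.IsFlow ε g →
      ∃ f : E → ℤ, G.IsFlow ε f ∧ (∀ e, |f e| < (q : ℤ)) ∧
        ∀ e, ((f e : ZMod q) = g e)) := by
  have : NeZero q := ⟨hq.ne'⟩
  refine ⟨fun g hg hnz => ?_, fun g hg => Multigraph.exists_isFlow_intCast_eq hg⟩
  obtain ⟨f, hflow, hf, hfg⟩ := Multigraph.exists_isFlow_intCast_eq hg
  refine ⟨f, hflow, fun e => ⟨abs_pos.mpr fun h0 => hnz e ?_, hf e⟩, hfg⟩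
  rw [← hfg e, h0, Int.cast_zero]
end

section
/- Let f1, f2 be real q-flows of (G,ε) (real flows with |f_i(e)| < q for all e) with f1(e) ≡ f2(e) (mod q) for every edge e. Then the associated orientations ε_{f1} and ε_{f2} are Eulerian equivalent, where ε_f agrees with ε on edges where f > 0 and is reversed on edges where f ≤ 0. -/
open Finset

/-- The orientation `ε_f` associated with a real-valued function `f`: agrees with
`ε` on edges where `f > 0`, and is reversed on edges where `f ≤ 0`. -/
noncomputable def Multigraph.orientOf {E : Type} (ε : E → Bool) (f : E → ℝ) (e : E) : Bool :=
  if 0 < f e then ε e else !ε e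

/-!
Write `f₁ - f₂ = k q` with `k` integral. Subtracting flows gives a real flow, so `k` is an
integer flow of `(G, ε)`. Since `x - [x > 0] q` is the representative of `x` modulo `q` in
`(-q, 0]`, the bounds `|fᵢ| < q` force `k(e) = [f₁(e) > 0] - [f₂(e) > 0]`. This is `0` where
`ε_{f₁}` and `ε_{f₂}` agree and `±1` where they disagree, with the sign making
`k(e) ε(v,e) = ε_{f₁}(v,e)`; so the conservation law of `k` is exactly Eulerian equivalence.
-/

open Finset

namespace Multigraph

variable {V E : Type} [DecidableEq V] (G : Multigraph V E)

theorem ite_eq_orientOf_mul_inc (ε : E → Bool) (f₁ f₂ : E → ℝ) (v : V) (e : E) :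
    (if orientOf ε f₁ e = orientOf ε f₂ e then 0 else G.inc (orientOf ε f₁) v e) =
      ((if 0 < f₁ e then 1 else 0) - (if 0 < f₂ e then 1 else 0)) * G.inc ε v e := by
  by_cases h₁ : 0 < f₁ e <;> by_cases h₂ : 0 < f₂ e <;> cases hε : ε e <;>
    simp [orientOf, inc, src, tgt, h₁, h₂, hε]

variable [Fintype E]

theorem eulerianEquiv_orientOf_iff (ε : E → Bool) (f₁ f₂ : E → ℝ) :
    G.EulerianEquiv (orientOf ε f₁) (orientOf ε f₂) ↔
      G.IsFlow ε fun e => (if 0 < f₁ e then 1 else 0) - (if 0 < f₂ e then (1 : ℤ) else 0) := by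
  simp only [EulerianEquiv, IsFlow, ite_eq_orientOf_mul_inc, smul_eq_mul, mul_comm]

variable {G}

theorem IsFlow.sub {A : Type} [AddCommGroup A] {o : E → Bool}
    {f g : E → A} (hf : G.IsFlow o f) (hg : G.IsFlow o g) : G.IsFlow o (f - g) := by
  intro v
  simp only [Pi.sub_apply, smul_sub, sum_sub_distrib, hf v, hg v, sub_zero]

theorem IsFlow.of_intCast_mul {o : E → Bool} {k : E → ℤ} {c : ℝ} (hc : c ≠ 0)
    (h : G.IsFlow o fun e => (k e : ℝ) * c) : G.IsFlow o k := by
  intro v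
  have hv := h v
  simp only [zsmul_eq_mul, ← mul_assoc, ← sum_mul] at hv
  exact_mod_cast (mul_eq_zero.mp hv).resolve_right hc

end Multigraph

theorem int_eq_ite_pos_sub_ite_pos_of_sub_eq_mul {a b q : ℝ} {k : ℤ} (ha : |a| < q)
    (hb : |b| < q) (h : a - b = k * q) :
    k = (if 0 < a then 1 else 0) - (if 0 < b then 1 else 0) := by
  have hq : 0 < q := (abs_nonneg a).trans_lt ha
  have rep : ∀ x : ℝ, |x| < q →
      -q < x - (if 0 < x then 1 else 0) * q ∧ x - (if 0 < x then 1 else 0) * q ≤ 0 := by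
    intro x hx
    rw [abs_lt] at hx
    split_ifs <;> constructor <;> linarith
  set t : ℤ := (if 0 < a then 1 else 0) - (if 0 < b then 1 else 0)
  have hdiff : ((k - t : ℤ) : ℝ) * q =
      (a - (if 0 < a then 1 else 0) * q) - (b - (if 0 < b then 1 else 0) * q) := by
    simp only [t]; push_cast; linarith
  have hlt : |((k - t : ℤ) : ℝ)| * q < 1 * q := by
    rw [← abs_of_pos hq, ← abs_mul, hdiff, abs_of_pos hq, one_mul, abs_sub_lt_iff]
    obtain ⟨ha₁, ha₂⟩ := rep a ha
    obtain ⟨hb₁, hb₂⟩ := rep b hb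
    constructor <;> linarith
  have hlt' : |((k - t : ℤ) : ℝ)| < 1 := lt_of_mul_lt_mul_of_nonneg_right hlt hq.le
  exact sub_eq_zero.mp (Int.abs_lt_one_iff.mp (by exact_mod_cast hlt'))

theorem orientOf_eulerianEquiv_of_congruent_general {V E : Type} [Fintype E]
    [DecidableEq V] (G : Multigraph V E) (ε : E → Bool) (q : ℤ) (hq : 0 < q)
    (f₁ f₂ : E → ℝ) (h₁ : G.IsFlow ε f₁) (h₂ : G.IsFlow ε f₂)
    (hb₁ : ∀ e, |f₁ e| < (q : ℝ)) (hb₂ : ∀ e, |f₂ e| < (q : ℝ))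
    (hcong : ∀ e, ∃ k : ℤ, f₁ e - f₂ e = (k : ℝ) * (q : ℝ)) :
    G.EulerianEquiv (Multigraph.orientOf ε f₁) (Multigraph.orientOf ε f₂) := by
  choose k hk using hcong
  have hk_flow : G.IsFlow ε fun e => (k e : ℝ) * q := by
    simpa only [Pi.sub_def, hk] using h₁.sub h₂
  have hk_eq : k = fun e => (if 0 < f₁ e then 1 else 0) - (if 0 < f₂ e then 1 else 0) :=
    funext fun e => int_eq_ite_pos_sub_ite_pos_of_sub_eq_mul (hb₁ e) (hb₂ e) (hk e)
  rw [G.eulerianEquiv_orientOf_iff, ← hk_eq]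
  exact .of_intCast_mul (by exact_mod_cast hq.ne') hk_flow

/-- if `f₁, f₂` are real `q`-flows of `(G,ε)` (i.e. `|fᵢ(e)| < q`)
which are congruent mod `q` on every edge, then the associated orientations
`ε_{f₁}` and `ε_{f₂}` are Eulerian equivalent. -/
theorem orientOf_eulerianEquiv_of_congruent {V E : Type} [Fintype V] [Fintype E]
    [DecidableEq V] (G : Multigraph V E) (ε : E → Bool) (q : ℤ) (hq : 0 < q)
    (f₁ f₂ : E → ℝ) (h₁ : G.IsFlow ε f₁) (h₂ : G.IsFlow ε f₂)
    (hb₁ : ∀ e, |f₁ e| < (q : ℝ)) (hb₂ : ∀ e, |f₂ e| < (q : ℝ))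
    (hcong : ∀ e, ∃ k : ℤ, f₁ e - f₂ e = (k : ℝ) * (q : ℝ)) :
    G.EulerianEquiv (Multigraph.orientOf ε f₁) (Multigraph.orientOf ε f₂) :=
  orientOf_eulerianEquiv_of_congruent_general G ε q hq f₁ f₂ h₁ h₂ hb₁ hb₂ hcong
end
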